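/- arXiv:1409.3016 — 9 statements merged into one kernel-verified Lean document; each statement's English description precedes it below -/
import Mathlib

section
/- For a regular point λ of (A, j), let the defect number d(λ) be the Hilbert-space (orthogonal) dimension of the orthogonal complement in F of the closed subspace range(A − λj). Then d is locally constant on the set of regular points: for every regular point λ₀ there exists ε > 0 such that every λ with |λ − λ₀| < ε is a regular point and d(λ) = d(λ₀); consequently d is constant on each connected component of the open set of regular points. -/
/-!
If `T` is bounded below by `c > 0`, its range is complete, and for `‖S - T‖ < c` the subspaces
`(range S)ᗮ` and `range T` meet only in `0`: if `T x ⊥ range S`, then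
`‖T x‖² = |⟪T x - S x, T x⟫| ≤ ‖S - T‖ ‖x‖ ‖T x‖`, which together with `c ‖x‖ ≤ ‖T x‖`
forces `T x = 0`. Orthogonal projection onto `(range T)ᗮ` is therefore injective on
`(range S)ᗮ`, so the defect of `S` is at most that of `T`. When `2 ‖S - T‖ < c`, `S` is bounded
below by `c - ‖S - T‖ > ‖S - T‖`, and the roles of `S` and `T` can be swapped. Apply this to
`T = A - λ₀ j` and `S = A - λ j`, for which `‖S - T‖ = |λ - λ₀| ‖j‖`; constancy on preconnected
sets of regular points follows from local constancy.
-/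

variable {E F : Type*} [NormedAddCommGroup E] [InnerProductSpace ℂ E] [CompleteSpace E]
  [NormedAddCommGroup F] [InnerProductSpace ℂ F] [CompleteSpace F]

/-- `λ` is a regular point for `(A, j)`. -/
def IsRegularPoint (j A : E →L[ℂ] F) (lam : ℂ) : Prop :=
  ∃ c : ℝ, 0 < c ∧ ∀ f : E, c * ‖f‖ ≤ ‖(A - lam • j) f‖

/-- The defect number of `(A, j)` at `λ`: the dimension of the orthogonal complement in `F`
of the range of `A - λj` (which is a closed subspace when `λ` is a regular point). -/
noncomputable def defectNumber (j A : E →L[ℂ] F) (lam : ℂ) : Cardinal :=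
  Module.rank ℂ ↥((LinearMap.range ((A - lam • j) : E →L[ℂ] F).toLinearMap)ᗮ)

section

variable {𝕜 X Y : Type*} [NontriviallyNormedField 𝕜]

theorem ContinuousLinearMap.sub_norm_sub_mul_norm_le_norm_apply [SeminormedAddCommGroup X]
    [SeminormedAddCommGroup Y] [NormedSpace 𝕜 X] [NormedSpace 𝕜 Y] {S T : X →L[𝕜] Y} {c : ℝ}
    (hT : ∀ x, c * ‖x‖ ≤ ‖T x‖) (x : X) : (c - ‖S - T‖) * ‖x‖ ≤ ‖S x‖ := by
  have : ‖T x‖ ≤ ‖S x‖ + ‖S - T‖ * ‖x‖ := calc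
    ‖T x‖ = ‖S x - (S - T) x‖ := by simp
    _ ≤ ‖S x‖ + ‖(S - T) x‖ := norm_sub_le _ _
    _ ≤ ‖S x‖ + ‖S - T‖ * ‖x‖ := by gcongr; exact le_opNorm _ _
  linarith [hT x]

theorem ContinuousLinearMap.isComplete_range_of_mul_norm_le [NormedAddCommGroup X]
    [NormedAddCommGroup Y] [NormedSpace 𝕜 X] [NormedSpace 𝕜 Y] [CompleteSpace X]
    {T : X →L[𝕜] Y} {c : ℝ} (hc : 0 < c) (hT : ∀ x, c * ‖x‖ ≤ ‖T x‖) :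
    IsComplete (Set.range T) := by
  obtain ⟨K, hK⟩ := antilipschitzWith_iff_exists_mul_le_norm.mpr ⟨c, hc, hT⟩
  exact hK.isComplete_range T.uniformContinuous

end

section

variable {𝕜 X Y : Type*} [RCLike 𝕜] [NormedAddCommGroup X] [NormedSpace 𝕜 X] [CompleteSpace X]
  [NormedAddCommGroup Y] [InnerProductSpace 𝕜 Y]

open scoped InnerProductSpace

theorem Submodule.rank_le_rank_orthogonal_of_disjoint {M N : Submodule 𝕜 Y}
    [N.HasOrthogonalProjection] (h : Disjoint M N) : Module.rank 𝕜 M ≤ Module.rank 𝕜 Nᗮ := by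
  refine LinearMap.rank_le_of_injective (Nᗮ.orthogonalProjectionOnto.toLinearMap ∘ₗ M.subtype) ?_
  rwa [← LinearMap.ker_eq_bot, LinearMap.ker_comp, Submodule.ker_orthogonalProjectionOnto,
    Submodule.orthogonal_orthogonal, ← Submodule.disjoint_iff_comap_eq_bot]

theorem ContinuousLinearMap.rank_orthogonal_range_le_of_norm_sub_lt {S T : X →L[𝕜] Y} {c : ℝ}
    (hc : 0 < c) (hT : ∀ x, c * ‖x‖ ≤ ‖T x‖) (hST : ‖S - T‖ < c) :
    Module.rank 𝕜 (LinearMap.range (S : X →ₗ[𝕜] Y))ᗮ ≤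
      Module.rank 𝕜 (LinearMap.range (T : X →ₗ[𝕜] Y))ᗮ := by
  have : CompleteSpace (LinearMap.range (T : X →ₗ[𝕜] Y)) :=
    (T.isComplete_range_of_mul_norm_le hc hT).completeSpace_coe
  refine Submodule.rank_le_rank_orthogonal_of_disjoint (Submodule.disjoint_def.mpr ?_)
  rintro _ hS ⟨x, rfl⟩
  have hinner : ⟪S x, T x⟫_𝕜 = 0 := hS (S x) ⟨x, rfl⟩
  have hsq : ‖T x‖ ^ 2 ≤ ‖S - T‖ * ‖x‖ * ‖T x‖ := calc
    ‖T x‖ ^ 2 = ‖⟪T x - S x, T x⟫_𝕜‖ := by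
      rw [inner_sub_left, hinner, sub_zero, inner_self_eq_norm_sq_to_K]; simp
    _ ≤ ‖T x - S x‖ * ‖T x‖ := norm_inner_le_norm _ _
    _ = ‖(S - T) x‖ * ‖T x‖ := by rw [norm_sub_rev, sub_apply]
    _ ≤ ‖S - T‖ * ‖x‖ * ‖T x‖ := by gcongr; exact le_opNorm _ _
  suffices hx : ‖x‖ = 0 by simp [norm_eq_zero.mp hx]
  by_contra hx
  have hx : 0 < ‖x‖ := (norm_nonneg x).lt_of_ne' hx
  have hTx : 0 < ‖T x‖ := (mul_pos hc hx).trans_le (hT x)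
  have : ‖T x‖ ≤ ‖S - T‖ * ‖x‖ := le_of_mul_le_mul_right (by rwa [sq] at hsq) hTx
  linarith [hT x, mul_lt_mul_of_pos_right hST hx]

theorem ContinuousLinearMap.rank_orthogonal_range_eq_of_two_mul_norm_sub_lt {S T : X →L[𝕜] Y}
    {c : ℝ} (hc : 0 < c) (hT : ∀ x, c * ‖x‖ ≤ ‖T x‖) (hST : 2 * ‖S - T‖ < c) :
    Module.rank 𝕜 (LinearMap.range (S : X →ₗ[𝕜] Y))ᗮ =
      Module.rank 𝕜 (LinearMap.range (T : X →ₗ[𝕜] Y))ᗮ := by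
  have hS := S.sub_norm_sub_mul_norm_le_norm_apply hT
  refine le_antisymm
    (rank_orthogonal_range_le_of_norm_sub_lt hc hT (by linarith [norm_nonneg (S - T)]))
    (rank_orthogonal_range_le_of_norm_sub_lt (by linarith) hS ?_)
  rw [norm_sub_rev]
  linarith

end

section

variable {X Y : Type*} [NormedAddCommGroup X] [InnerProductSpace ℂ X] [CompleteSpace X]
  [NormedAddCommGroup Y] [InnerProductSpace ℂ Y]

theorem IsRegularPoint.exists_forall_norm_sub_lt {j A : X →L[ℂ] Y} {lam₀ : ℂ}
    (h : IsRegularPoint j A lam₀) :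
    ∃ ε : ℝ, 0 < ε ∧ ∀ lam : ℂ, ‖lam - lam₀‖ < ε →
      IsRegularPoint j A lam ∧ defectNumber j A lam = defectNumber j A lam₀ := by
  obtain ⟨c, hc, hreg⟩ := h
  refine ⟨c / (2 * (‖j‖ + 1)), by positivity, fun lam hlam => ?_⟩
  have hsmall : 2 * ‖(A - lam • j) - (A - lam₀ • j)‖ < c := calc
    2 * ‖(A - lam • j) - (A - lam₀ • j)‖ = 2 * (‖lam - lam₀‖ * ‖j‖) := by
      rw [sub_sub_sub_cancel_left, ← sub_smul, norm_smul, norm_sub_rev]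
    _ ≤ 2 * (‖lam - lam₀‖ * (‖j‖ + 1)) := by gcongr; linarith
    _ < 2 * (c / (2 * (‖j‖ + 1)) * (‖j‖ + 1)) := by gcongr
    _ = c := by field_simp
  exact ⟨⟨_, by linarith, (A - lam • j).sub_norm_sub_mul_norm_le_norm_apply hreg⟩,
    ContinuousLinearMap.rank_orthogonal_range_eq_of_two_mul_norm_sub_lt hc hreg hsmall⟩

end

theorem defectNumber_locallyConstant_on_regular_points_general
    (j : E →L[ℂ] F)
    (A : E →L[ℂ] F) :
    (∀ lam₀ : ℂ, IsRegularPoint j A lam₀ →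
      ∃ ε : ℝ, 0 < ε ∧ ∀ lam : ℂ, ‖lam - lam₀‖ < ε →
        IsRegularPoint j A lam ∧ defectNumber j A lam = defectNumber j A lam₀) ∧
    (∀ s : Set ℂ, IsPreconnected s → (∀ lam ∈ s, IsRegularPoint j A lam) →
      ∀ lam₁ ∈ s, ∀ lam₂ ∈ s, defectNumber j A lam₁ = defectNumber j A lam₂) := by
  refine ⟨fun _ h => h.exists_forall_norm_sub_lt, fun s hs hreg lam₁ h₁ lam₂ h₂ => ?_⟩
  refine hs.induction₂ (fun a b => defectNumber j A a = defectNumber j A b) (fun lam hlam => ?_)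
    (fun _ _ _ _ _ _ => Eq.trans) (fun _ _ _ _ => Eq.symm) h₁ h₂
  obtain ⟨ε, hε, hball⟩ := (hreg lam hlam).exists_forall_norm_sub_lt
  filter_upwards [nhdsWithin_le_nhds (Metric.ball_mem_nhds lam hε)] with μ hμ
  exact (hball μ (mem_ball_iff_norm.mp hμ)).2.symm

/-- The defect number is locally constant on the open set of regular points of `(A, j)`;
consequently it is constant on each connected component of that set. -/
theorem defectNumber_locallyConstant_on_regular_points
    (j : E →L[ℂ] F) (hj_inj : Function.Injective j) (hj_dense : DenseRange j)
    (A : E →L[ℂ] F) :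
    (∀ lam₀ : ℂ, IsRegularPoint j A lam₀ →
      ∃ ε : ℝ, 0 < ε ∧ ∀ lam : ℂ, ‖lam - lam₀‖ < ε →
        IsRegularPoint j A lam ∧ defectNumber j A lam = defectNumber j A lam₀) ∧
    (∀ s : Set ℂ, IsPreconnected s → (∀ lam ∈ s, IsRegularPoint j A lam) →
      ∀ lam₁ ∈ s, ∀ lam₂ ∈ s, defectNumber j A lam₁ = defectNumber j A lam₂) :=
  defectNumber_locallyConstant_on_regular_points_general j A
end

section
/- Let A : E → F be a continuous linear map. Then the resolvent set ρ(A, j) := { λ ∈ ℂ : A − λj is bijective } is an open subset of ℂ. -/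
open Function

/-- By the open mapping theorem a bijective operator between Banach spaces is an isomorphism,
and isomorphisms form an open set. -/
theorem ContinuousLinearMap.isOpen_setOf_bijective {𝕜 E F : Type*} [NontriviallyNormedField 𝕜]
    [NormedAddCommGroup E] [NormedSpace 𝕜 E] [CompleteSpace E]
    [NormedAddCommGroup F] [NormedSpace 𝕜 F] [CompleteSpace F] :
    IsOpen {T : E →L[𝕜] F | Bijective T} := by
  convert ContinuousLinearEquiv.isOpen (𝕜 := 𝕜) (E := E) (F := F) using 1
  ext T
  refine ⟨fun hT => ?_, ?_⟩
  · exact ⟨.ofBijective T (LinearMap.ker_eq_bot.2 hT.1) (LinearMap.range_eq_top.2 hT.2), rfl⟩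
  · rintro ⟨e, rfl⟩
    exact e.bijective

theorem isOpen_resolventSet_pip_general
    {E F : Type*} [NormedAddCommGroup E] [InnerProductSpace ℂ E] [CompleteSpace E]
    [NormedAddCommGroup F] [InnerProductSpace ℂ F] [CompleteSpace F]
    (j : E →L[ℂ] F)
    (A : E →L[ℂ] F) :
    IsOpen {lam : ℂ | Function.Bijective ⇑(A - lam • j)} :=
  ContinuousLinearMap.isOpen_setOf_bijective.preimage (by fun_prop)

/-- The resolvent set `ρ(A, j) = {λ ∈ ℂ : A − λj is bijective}` is an open subset of `ℂ`. -/
theorem isOpen_resolventSet_pip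
    {E F : Type*} [NormedAddCommGroup E] [InnerProductSpace ℂ E] [CompleteSpace E]
    [NormedAddCommGroup F] [InnerProductSpace ℂ F] [CompleteSpace F]
    (j : E →L[ℂ] F) (hj_inj : Function.Injective j) (hj_dense : DenseRange j)
    (A : E →L[ℂ] F) :
    IsOpen {lam : ℂ | Function.Bijective ⇑(A - lam • j)} :=
  isOpen_resolventSet_pip_general j A
end

section
/- Let A : E → F be a continuous linear map and let ρ(A, j) := { λ ∈ ℂ : A − λj is bijective }. Then the map λ ↦ R_λ := (A − λj)⁻¹, from ρ(A, j) into the Banach space of continuous linear maps from F to E with the operator norm, is analytic: at every point λ₀ ∈ ρ(A, j) it is given by a convergent power series in operator norm on a neighbourhood of λ₀. -/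
/-- The resolvent map `λ ↦ R_λ = (A − λj)⁻¹`, from the resolvent set
`ρ(A, j) = {λ : A − λj is bijective}` into the Banach space `F →L[ℂ] E` with the operator
norm, is analytic: at every point of `ρ(A, j)` it is given by a convergent power series. -/
theorem resolvent_analyticAt
    {E F : Type*} [NormedAddCommGroup E] [InnerProductSpace ℂ E] [CompleteSpace E]
    [NormedAddCommGroup F] [InnerProductSpace ℂ F] [CompleteSpace F]
    (j : E →L[ℂ] F) (hj_inj : Function.Injective j) (hj_dense : DenseRange j)
    (A : E →L[ℂ] F)
    (R : ℂ → (F →L[ℂ] E))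
    (hR : ∀ lam ∈ {lam : ℂ | Function.Bijective ⇑(A - lam • j)},
      (∀ g : F, (A - lam • j) (R lam g) = g) ∧ (∀ f : E, R lam ((A - lam • j) f) = f)) :
    ∀ lam₀ ∈ {lam : ℂ | Function.Bijective ⇑(A - lam • j)}, AnalyticAt ℂ R lam₀ := by
  intro lam₀ h₀
  obtain ⟨h1, h2⟩ := hR lam₀ h₀
  set R₀ : F →L[ℂ] E := R lam₀ with hR₀
  -- the auxiliary map `T λ = R₀ ∘ (A - λ j) : E →L E`
  set T : ℂ → (E →L[ℂ] E) := fun lam => R₀.comp (A - lam • j) with hT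
  have hTform : T = fun lam => R₀.comp A - lam • R₀.comp j := by
    funext lam; ext f
    simp [T, sub_eq_add_neg]
  have hTanal : AnalyticAt ℂ T lam₀ := by
    rw [hTform]
    exact analyticAt_const.sub ((analyticAt_id.smul analyticAt_const))
  have hT0 : T lam₀ = 1 := by
    ext f; exact h2 f
  -- eventually `‖T λ - 1‖ < 1`
  have hev : ∀ᶠ lam in nhds lam₀, ‖T lam - 1‖ < 1 := by
    have hc : ContinuousAt (fun lam => ‖T lam - 1‖) lam₀ :=
      ((hTanal.continuousAt.sub continuousAt_const).norm)
    have h0 : ‖T lam₀ - 1‖ = 0 := by simp [hT0]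
    have := hc.tendsto
    rw [h0] at this
    exact this.eventually_lt_const one_pos
  -- on this neighbourhood, `R λ = (T λ)⁻¹ ∘ R₀`
  have hcong : ∀ᶠ lam in nhds lam₀,
      (fun lam => (Ring.inverse (T lam)).comp R₀) lam = R lam := by
    filter_upwards [hev] with lam hlam
    have hnorm : ‖1 - T lam‖ < 1 := by rwa [norm_sub_rev]
    set u : (E →L[ℂ] E)ˣ := Units.oneSub (1 - T lam) hnorm with hu
    have huval : (u : E →L[ℂ] E) = T lam := by
      simp [hu, Units.oneSub]
    -- `A - λ j = (A - λ₀ j) ∘ T λ`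
    have hfact : (A - lam • j) = (A - lam₀ • j).comp (T lam) := by
      ext f
      exact (h1 ((A - lam • j) f)).symm
    -- `A - λ j` is bijective
    have hbij : Function.Bijective ⇑(A - lam • j) := by
      rw [hfact]
      have hTu : Function.Bijective ⇑(T lam) := by
        rw [← huval]
        refine Function.bijective_iff_has_inverse.2 ⟨⇑(↑u⁻¹ : E →L[ℂ] E), ?_, ?_⟩
        · intro x
          rw [← ContinuousLinearMap.comp_apply, ← ContinuousLinearMap.mul_def, u.inv_mul,
            ContinuousLinearMap.one_apply]
        · intro x
          rw [← ContinuousLinearMap.comp_apply, ← ContinuousLinearMap.mul_def, u.mul_inv,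
            ContinuousLinearMap.one_apply]
      exact h₀.comp hTu
    obtain ⟨g1, g2⟩ := hR lam hbij
    -- both sides are inverses of the bijection `A - λ j`
    ext g
    obtain ⟨f, rfl⟩ := hbij.2 g
    rw [g2 f]
    have hstep : R₀ ((A - lam • j) f) = T lam f := by
      rw [hfact, ContinuousLinearMap.comp_apply]; exact h2 _
    simp only [ContinuousLinearMap.comp_apply, hstep]
    have : Ring.inverse (T lam) = (↑u⁻¹ : E →L[ℂ] E) := by
      rw [← huval, Ring.inverse_unit]
    rw [this, ← huval, ← ContinuousLinearMap.comp_apply, ← ContinuousLinearMap.mul_def,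
      u.inv_mul, ContinuousLinearMap.one_apply]
  -- the candidate function is analytic
  have hanal : AnalyticAt ℂ (fun lam => (Ring.inverse (T lam)).comp R₀) lam₀ := by
    have hinv : AnalyticAt ℂ (Ring.inverse : (E →L[ℂ] E) → (E →L[ℂ] E)) (T lam₀) := by
      rw [hT0]
      exact analyticAt_inverse (1 : (E →L[ℂ] E)ˣ)
    have hL : AnalyticAt ℂ (fun B : E →L[ℂ] E => B.comp R₀) (Ring.inverse (T lam₀)) :=
      ((ContinuousLinearMap.compL ℂ F E E).flip R₀).analyticAt _
    have hcomp : AnalyticAt ℂ (fun lam => Ring.inverse (T lam)) lam₀ := hinv.comp hTanal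
    exact AnalyticAt.comp (g := fun B : E →L[ℂ] E => B.comp R₀)
      (f := fun lam => Ring.inverse (T lam)) hL hcomp
  exact hanal.congr hcong
end

section
/- Let E and F be complex Hilbert spaces, U ⊆ ℂ an open set, and B : U → L(E, F) a family of continuous linear maps such that: (a) for every f ∈ E and g ∈ F the scalar function z ↦ ⟨g, B(z) f⟩ is holomorphic on U (B is weakly analytic), and (b) for every f ∈ E the map z ↦ B(z) f is continuous from U into F. Then the map z ↦ B(z) is analytic on U with respect to the operator norm: at every z₀ ∈ U it admits a derivative B'(z₀) ∈ L(E, F) in operator norm, and is given locally by a norm-convergent power series. -/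
/-!
Strong continuity and Banach–Steinhaus bound `‖B z‖ ≤ M` on a closed disc of radius `r`
around `z₀`. Cauchy's estimates for the scalar functions `z ↦ ⟨g, B z f⟩` then bound the
difference of two difference quotients by
`|⟨g, (slope B z₀ z - slope B z₀ z') f⟩| ≤ 2M/r² (|z - z₀| + |z' - z₀|) ‖f‖ ‖g‖`,
uniformly in `f` and `g`, so the difference quotients of `B` are Cauchy in operator norm and
converge. A complex-differentiable function on an open set is analytic.
-/

open Metric Filter Topology

theorem norm_sub_sub_smul_deriv_le {X : Type*} [NormedAddCommGroup X] [NormedSpace ℂ X]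
    [CompleteSpace X] {f : ℂ → X} {c z : ℂ} {r K : ℝ} (hr : 0 < r)
    (hf : DifferentiableOn ℂ f (closedBall c r)) (hK : ∀ w ∈ sphere c r, ‖f w‖ ≤ K)
    (hz : ‖z - c‖ ≤ r / 2) :
    ‖f z - f c - (z - c) • deriv f c‖ ≤ 2 * K / r ^ 2 * ‖z - c‖ ^ 2 := by
  have hK0 : 0 ≤ K := (norm_nonneg _).trans (hK (c + r) (by simp [abs_of_pos hr]))
  set t := ‖z - c‖ / r with ht
  have ht0 : 0 ≤ t := by positivity
  have ht2 : t ≤ 1 / 2 := by rw [ht, div_le_iff₀ hr]; linarith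
  have hsum := Complex.hasSum_taylorSeries_on_ball (hf.mono ball_subset_closedBall)
    (mem_ball_iff_norm.2 (by linarith))
  have hterm : ∀ n : ℕ, ‖(n.factorial : ℂ)⁻¹ • (z - c) ^ n • iteratedDeriv n f c‖ ≤ K * t ^ n := by
    intro n
    have hcauchy := Complex.norm_iteratedDeriv_le_of_forall_mem_sphere_norm_le n hr
      (hf.diffContOnCl_ball subset_rfl) hK
    calc _ = (n.factorial : ℝ)⁻¹ * ‖z - c‖ ^ n * ‖iteratedDeriv n f c‖ := by
          rw [norm_smul, norm_smul, norm_inv, norm_pow, Complex.norm_natCast, mul_assoc]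
      _ ≤ (n.factorial : ℝ)⁻¹ * ‖z - c‖ ^ n * (n.factorial * K / r ^ n) := by gcongr
      _ = K * t ^ n := by rw [ht, div_pow]; field_simp
  have htail : ‖f z - f c - (z - c) • deriv f c‖ ≤ K * t ^ 2 * (1 - t)⁻¹ := by
    have hgeom := (hasSum_geometric_of_lt_one ht0 (by linarith)).mul_left (K * t ^ 2)
    have hrem : f z - f c - (z - c) • deriv f c =
        ∑' n : ℕ, ((n + 2).factorial : ℂ)⁻¹ • (z - c) ^ (n + 2) • iteratedDeriv (n + 2) f c := by
      rw [((hasSum_nat_add_iff' 2).2 hsum).tsum_eq]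
      simp [Finset.sum_range_succ, iteratedDeriv_one, sub_sub]
    rw [hrem]
    exact tsum_of_norm_bounded hgeom (fun n => (hterm (n + 2)).trans_eq (by ring))
  calc _ ≤ K * t ^ 2 * (1 - t)⁻¹ := htail
    _ ≤ K * t ^ 2 * 2 := by
        gcongr
        rw [inv_le_comm₀ (by linarith) (by norm_num)]
        linarith
    _ = 2 * K / r ^ 2 * ‖z - c‖ ^ 2 := by rw [ht]; ring

theorem norm_slope_sub_deriv_le {X : Type*} [NormedAddCommGroup X] [NormedSpace ℂ X]
    [CompleteSpace X] {f : ℂ → X} {c z : ℂ} {r K : ℝ} (hr : 0 < r)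
    (hf : DifferentiableOn ℂ f (closedBall c r)) (hK : ∀ w ∈ sphere c r, ‖f w‖ ≤ K)
    (hzc : z ≠ c) (hz : ‖z - c‖ ≤ r / 2) :
    ‖slope f c z - deriv f c‖ ≤ 2 * K / r ^ 2 * ‖z - c‖ := by
  have hzc' : z - c ≠ 0 := sub_ne_zero.2 hzc
  have hslope : slope f c z - deriv f c = (z - c)⁻¹ • (f z - f c - (z - c) • deriv f c) := by
    rw [slope_def_module, smul_sub _ (f z - f c), inv_smul_smul₀ hzc']
  calc ‖slope f c z - deriv f c‖ ≤ ‖z - c‖⁻¹ * (2 * K / r ^ 2 * ‖z - c‖ ^ 2) := by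
        rw [hslope, norm_smul, norm_inv]
        gcongr
        exact norm_sub_sub_smul_deriv_le hr hf hK hz
    _ = 2 * K / r ^ 2 * ‖z - c‖ := by
        field_simp [norm_ne_zero_iff.2 hzc']

theorem IsCompact.exists_bound_of_continuousOn_apply {𝕜 X E F : Type*}
    [NontriviallyNormedField 𝕜] [TopologicalSpace X]
    [NormedAddCommGroup E] [NormedSpace 𝕜 E] [CompleteSpace E]
    [NormedAddCommGroup F] [NormedSpace 𝕜 F] {K : Set X} (hK : IsCompact K)
    {B : X → E →L[𝕜] F} (hB : ∀ f, ContinuousOn (fun x => B x f) K) :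
    ∃ M, ∀ x ∈ K, ‖B x‖ ≤ M := by
  obtain ⟨M, hM⟩ := banach_steinhaus (g := fun x : K => B x) fun f =>
    (hK.exists_bound_of_continuousOn (hB f)).imp fun _ hC x => hC x x.2
  exact ⟨M, fun x hx => hM ⟨x, hx⟩⟩

theorem ContinuousLinearMap.opNorm_le_of_forall_inner_le {𝕜 E F : Type*} [RCLike 𝕜]
    [NormedAddCommGroup E] [NormedSpace 𝕜 E] [NormedAddCommGroup F] [InnerProductSpace 𝕜 F]
    {T : E →L[𝕜] F} {C : ℝ} (hC : 0 ≤ C) (h : ∀ f g, ‖(inner 𝕜 g (T f) : 𝕜)‖ ≤ C * ‖f‖ * ‖g‖) :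
    ‖T‖ ≤ C :=
  T.opNorm_le_bound hC fun f => by
    rw [← innerSL_apply_norm 𝕜]
    exact (innerSL 𝕜 (T f)).opNorm_le_bound (by positivity) fun g => by
      rw [innerSL_apply_apply, norm_inner_symm]
      exact h f g

theorem differentiableAt_of_norm_slope_sub_slope_le {𝕜 X : Type*} [NontriviallyNormedField 𝕜]
    [NormedAddCommGroup X] [NormedSpace 𝕜 X] [CompleteSpace X] {f : 𝕜 → X} {c : 𝕜} {C : ℝ}
    (h : ∀ᶠ p in 𝓝[≠] c ×ˢ 𝓝[≠] c,
      ‖slope f c p.1 - slope f c p.2‖ ≤ C * (‖p.1 - c‖ + ‖p.2 - c‖)) :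
    DifferentiableAt 𝕜 f c := by
  have hcauchy : Cauchy (map (slope f c) (𝓝[≠] c)) := by
    refine cauchy_map_iff.2 ⟨inferInstance, tendsto_uniformity_iff_dist_tendsto_zero.2 ?_⟩
    have hlim : Tendsto (fun p : 𝕜 × 𝕜 => C * (‖p.1 - c‖ + ‖p.2 - c‖)) (𝓝[≠] c ×ˢ 𝓝[≠] c)
        (𝓝 0) := by
      have hcont : Continuous fun p : 𝕜 × 𝕜 => C * (‖p.1 - c‖ + ‖p.2 - c‖) := by fun_prop
      simpa using (hcont.tendsto (c, c)).mono_left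
        (nhds_prod_eq (x := c) (y := c) ▸ Filter.prod_mono nhdsWithin_le_nhds nhdsWithin_le_nhds)
    exact squeeze_zero' (.of_forall fun _ => dist_nonneg)
      (h.mono fun p hp => (dist_eq_norm _ _).trans_le hp) hlim
  obtain ⟨D, hD⟩ := cauchy_map_iff_exists_tendsto.1 hcauchy
  exact (hasDerivAt_iff_tendsto_slope.2 hD).differentiableAt

section

variable {E F : Type*} [NormedAddCommGroup E] [InnerProductSpace ℂ E]
  [NormedAddCommGroup F] [InnerProductSpace ℂ F]

theorem inner_slope_apply (B : ℂ → E →L[ℂ] F) (c z : ℂ) (f : E) (g : F) :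
    inner ℂ g (slope B c z f) = slope (fun w => inner ℂ g (B w f)) c z := by
  simp [slope_def_module]

theorem norm_slope_sub_slope_le_of_inner_differentiableOn {B : ℂ → E →L[ℂ] F} {c z z' : ℂ}
    {r M : ℝ} (hr : 0 < r)
    (hweak : ∀ f g, DifferentiableOn ℂ (fun w => (inner ℂ g (B w f) : ℂ)) (closedBall c r))
    (hM : ∀ w ∈ sphere c r, ‖B w‖ ≤ M) (hz : z ≠ c) (hz' : z' ≠ c)
    (hzr : ‖z - c‖ ≤ r / 2) (hzr' : ‖z' - c‖ ≤ r / 2) :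
    ‖slope B c z - slope B c z'‖ ≤ 2 * M / r ^ 2 * (‖z - c‖ + ‖z' - c‖) := by
  have hM0 : 0 ≤ M := (norm_nonneg _).trans (hM (c + r) (by simp [abs_of_pos hr]))
  refine ContinuousLinearMap.opNorm_le_of_forall_inner_le (by positivity) fun f g => ?_
  set φ : ℂ → ℂ := fun w => inner ℂ g (B w f)
  have hφ : ∀ w ∈ sphere c r, ‖φ w‖ ≤ M * ‖f‖ * ‖g‖ := fun w hw =>
    calc ‖φ w‖ ≤ ‖g‖ * (‖B w‖ * ‖f‖) :=
          (norm_inner_le_norm _ _).trans (by gcongr; exact (B w).le_opNorm f)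
      _ ≤ M * ‖f‖ * ‖g‖ := by rw [mul_comm]; gcongr; exact hM w hw
  calc ‖(inner ℂ g ((slope B c z - slope B c z') f) : ℂ)‖
      = ‖(slope φ c z - deriv φ c) - (slope φ c z' - deriv φ c)‖ := by
        rw [sub_apply, inner_sub_right, inner_slope_apply, inner_slope_apply,
          sub_sub_sub_cancel_right]
    _ ≤ 2 * (M * ‖f‖ * ‖g‖) / r ^ 2 * ‖z - c‖ + 2 * (M * ‖f‖ * ‖g‖) / r ^ 2 * ‖z' - c‖ :=
        (norm_sub_le _ _).trans (add_le_add (norm_slope_sub_deriv_le hr (hweak f g) hφ hz hzr)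
          (norm_slope_sub_deriv_le hr (hweak f g) hφ hz' hzr'))
    _ = 2 * M / r ^ 2 * (‖z - c‖ + ‖z' - c‖) * ‖f‖ * ‖g‖ := by ring

theorem differentiableAt_of_inner_differentiableOn_closedBall [CompleteSpace E] [CompleteSpace F]
    {B : ℂ → E →L[ℂ] F} {c : ℂ} {r : ℝ} (hr : 0 < r)
    (hweak : ∀ f g, DifferentiableOn ℂ (fun w => (inner ℂ g (B w f) : ℂ)) (closedBall c r))
    (hstrong : ∀ f, ContinuousOn (fun w => B w f) (closedBall c r)) :
    DifferentiableAt ℂ B c := by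
  obtain ⟨M, hM⟩ := (isCompact_closedBall c r).exists_bound_of_continuousOn_apply hstrong
  refine differentiableAt_of_norm_slope_sub_slope_le (C := 2 * M / r ^ 2) ?_
  have hnear : ∀ᶠ z in 𝓝[≠] c, z ≠ c ∧ ‖z - c‖ ≤ r / 2 :=
    eventually_mem_nhdsWithin.and <| eventually_nhdsWithin_of_eventually_nhds <|
      Filter.mem_of_superset (closedBall_mem_nhds c (half_pos hr))
        fun _ => mem_closedBall_iff_norm.1
  filter_upwards [hnear.prod_mk hnear] with p ⟨⟨hp₁, hp₁r⟩, hp₂, hp₂r⟩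
  exact norm_slope_sub_slope_le_of_inner_differentiableOn hr hweak
    (fun w hw => hM w (sphere_subset_closedBall hw)) hp₁ hp₂ hp₁r hp₂r

end

/-- If `B : U → L(E, F)` is weakly analytic (all matrix elements `z ↦ ⟨g, B(z)f⟩` are
holomorphic on the open set `U`) and strongly continuous (`z ↦ B(z)f` continuous on `U` for
every `f`), then `B` is analytic in operator norm on `U`: at every `z₀ ∈ U` it has a derivative
`B'(z₀) ∈ L(E, F)` and is given locally by a norm-convergent power series. -/
theorem weakly_analytic_to_norm_analytic
    {E F : Type*} [NormedAddCommGroup E] [InnerProductSpace ℂ E] [CompleteSpace E]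
    [NormedAddCommGroup F] [InnerProductSpace ℂ F] [CompleteSpace F]
    (U : Set ℂ) (hU : IsOpen U)
    (B : ℂ → (E →L[ℂ] F))
    (hweak : ∀ (f : E) (g : F), DifferentiableOn ℂ (fun z => (inner ℂ g (B z f) : ℂ)) U)
    (hstrong : ∀ f : E, ContinuousOn (fun z => B z f) U) :
    ∀ z₀ ∈ U, (∃ B' : E →L[ℂ] F, HasDerivAt B B' z₀) ∧ AnalyticAt ℂ B z₀ := by
  have hdiff : DifferentiableOn ℂ B U := fun z hz => by
    obtain ⟨r, hr, hrU⟩ := nhds_basis_closedBall.mem_iff.1 (hU.mem_nhds hz)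
    exact (differentiableAt_of_inner_differentiableOn_closedBall hr
      (fun f g => (hweak f g).mono hrU) (fun f => (hstrong f).mono hrU)).differentiableWithinAt
  intro z₀ hz₀
  have hz₀U : U ∈ 𝓝 z₀ := hU.mem_nhds hz₀
  exact ⟨⟨deriv B z₀, (hdiff.differentiableAt hz₀U).hasDerivAt⟩, hdiff.analyticAt hz₀U⟩
end

section
/- Let E, E′, F be complex Hilbert spaces, u : E → E′ an injective continuous linear map whose range is a proper subspace of E′ (range(u) ≠ E′), v : E′ → F an injective continuous linear map, and A : E′ → F a continuous linear map. If λ ∈ ℂ is such that the continuous linear map A∘u − λ·(v∘u) : E → F is bijective, then λ is a generalized eigenvalue of A: there exists g ∈ E′ with g ≠ 0 and A g = λ·(v g). -/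
/-- If `u : E → E′` is an injective continuous embedding with proper range, `v : E′ → F` is an
injective continuous embedding, `A : E′ → F` is continuous linear, and `A∘u − λ·(v∘u)` is
bijective, then `λ` is a generalized eigenvalue of `A`: there is `g ≠ 0` in `E′` with
`A g = λ·(v g)`. -/
theorem generalized_eigenvalue_of_bijective_on_smaller_space
    {E E' F : Type*} [NormedAddCommGroup E] [InnerProductSpace ℂ E] [CompleteSpace E]
    [NormedAddCommGroup E'] [InnerProductSpace ℂ E'] [CompleteSpace E']
    [NormedAddCommGroup F] [InnerProductSpace ℂ F] [CompleteSpace F]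
    (u : E →L[ℂ] E') (hu_inj : Function.Injective u) (hu_proper : Set.range ⇑u ≠ Set.univ)
    (v : E' →L[ℂ] F) (hv_inj : Function.Injective v)
    (A : E' →L[ℂ] F) (lam : ℂ)
    (hbij : Function.Bijective ⇑(A.comp u - lam • (v.comp u))) :
    ∃ g : E', g ≠ 0 ∧ A g = lam • v g := by
  obtain ⟨x, hx⟩ : ∃ x : E', x ∉ Set.range ⇑u := by
    by_contra h
    push_neg at h
    exact hu_proper (Set.eq_univ_of_forall h)
  obtain ⟨e, he⟩ := hbij.surjective (A x - lam • v x)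
  refine ⟨x - u e, ?_, ?_⟩
  · intro h0
    exact hx ⟨e, (sub_eq_zero.mp h0).symm⟩
  · simp only [ContinuousLinearMap.sub_apply, ContinuousLinearMap.smul_apply,
      ContinuousLinearMap.comp_apply] at he
    simp only [map_sub, smul_sub]
    rw [sub_eq_sub_iff_sub_eq_sub]
    exact he.symm
end

section
/- (KLMN-type theorem.) Assume there exists λ ∈ ℝ such that the map Φ : D → D, defined by requiring ⟨Φ(f), g⟩_D = b(f, g) − λ·⟨ι f, ι g⟩_H for all g ∈ D (Φ(f) exists and is unique by the Riesz representation theorem), is a bijection of D onto D. Define Dom(X₀) := { ι f : f ∈ D and there exists h ∈ H with b(f, g) = ⟨h, ι g⟩_H for all g ∈ D }, and for such f set X₀(ι f) := h (h is unique since ι has dense range, and f is determined by ι f since ι is injective). Then Dom(X₀) is a dense subspace of H, X₀ is a well-defined self-adjoint operator in H (X₀ equals its Hilbert-space adjoint), and λ belongs to the resolvent set of X₀: the map X₀ − λ·id is a bijection from Dom(X₀) onto H whose inverse is a bounded operator on H. -/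
/-!
Subtracting `λ⟪ι ·, ι ·⟫` from the Hermitian form `b` leaves a Hermitian form, so the Riesz map
`Φ` is a symmetric bijection of `D`; its inverse `Ψ` is then symmetric as well, hence bounded by
Hellinger–Toeplitz. The operator `R := ι Ψ ι†` on `H` is bounded and self-adjoint, and injective
because `ι` is injective with dense range. Unwinding the definition of `Φ`, `b(f, ·) = ⟪h, ι ·⟫`
holds exactly when `ι f = R (h - λ ι f)`, so `X₀ = R⁻¹ + λ` on `range R`. Such an operator is
self-adjoint: `range R` is dense because `(range R)ᗮ = ker R = 0`, and testing against `R z` shows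
that every `x` in the domain of the adjoint satisfies `x = R (X₀† x - λ x)`.
-/

open Function
open scoped InnerProductSpace ComplexConjugate

section

variable {𝕜 : Type*} [RCLike 𝕜]

theorem LinearEquiv.isSymmetric_symm {E : Type*} [NormedAddCommGroup E] [InnerProductSpace 𝕜 E]
    {e : E ≃ₗ[𝕜] E} (he : (e : E →ₗ[𝕜] E).IsSymmetric) : (e.symm : E →ₗ[𝕜] E).IsSymmetric :=
  fun x y => by simpa using (he (e.symm x) (e.symm y)).symm

theorem LinearMap.IsSymmetric.exists_isSelfAdjoint_inverse {E : Type*} [NormedAddCommGroup E]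
    [InnerProductSpace 𝕜 E] [CompleteSpace E] {L : E →ₗ[𝕜] E} (hL : L.IsSymmetric)
    (hbij : Bijective L) :
    ∃ Ψ : E →L[𝕜] E, IsSelfAdjoint Ψ ∧ LeftInverse L Ψ ∧ RightInverse L Ψ := by
  let e := LinearEquiv.ofBijective L hbij
  have he : (e.symm : E →ₗ[𝕜] E).IsSymmetric := LinearEquiv.isSymmetric_symm hL
  exact ⟨he.toSelfAdjoint, he.toSelfAdjoint.2, e.apply_symm_apply, e.symm_apply_apply⟩

theorem ContinuousLinearMap.injective_adjoint_of_denseRange {E F : Type*} [NormedAddCommGroup E]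
    [InnerProductSpace 𝕜 E] [CompleteSpace E] [NormedAddCommGroup F] [InnerProductSpace 𝕜 F]
    [CompleteSpace F] {A : E →L[𝕜] F} (hA : DenseRange A) : Injective A.adjoint :=
  (injective_iff_map_eq_zero _).mpr fun y hy =>
    DenseRange.eq_zero_of_inner_left 𝕜 hA fun x => by rw [← adjoint_inner_left, hy, inner_zero_left]

namespace LinearPMap

variable {H : Type*} [NormedAddCommGroup H] [InnerProductSpace 𝕜 H]

/-- The operator `R⁻¹ + μ` on `range R`, whose resolvent at `μ` is `R`. -/
noncomputable def ofResolvent (R : H →L[𝕜] H) (hR : Injective R) (μ : 𝕜) : H →ₗ.[𝕜] H where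
  domain := LinearMap.range (R : H →ₗ[𝕜] H)
  toFun := (LinearEquiv.ofInjective (R : H →ₗ[𝕜] H) hR).symm +
    μ • (LinearMap.range (R : H →ₗ[𝕜] H)).subtype

variable {R : H →L[𝕜] H} {hR : Injective R} {μ : 𝕜}

theorem mem_domain_ofResolvent (y : H) : R y ∈ (ofResolvent R hR μ).domain :=
  LinearMap.mem_range_self (R : H →ₗ[𝕜] H) y

theorem ofResolvent_apply {x : (ofResolvent R hR μ).domain} {y : H} (hy : R y = x) :
    ofResolvent R hR μ x = y + μ • (x : H) := by
  have : x = LinearEquiv.ofInjective (R : H →ₗ[𝕜] H) hR y := Subtype.ext hy.symm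
  change (LinearEquiv.ofInjective (R : H →ₗ[𝕜] H) hR).symm x + μ • (x : H) = _
  rw [this, LinearEquiv.symm_apply_apply]

theorem ofResolvent_apply_eq {x : (ofResolvent R hR μ).domain} {y : H}
    (hxy : (x : H) = R (y - μ • (x : H))) : ofResolvent R hR μ x = y := by
  rw [ofResolvent_apply hxy.symm, sub_add_cancel]

theorem resolvent_ofResolvent_sub_smul (x : (ofResolvent R hR μ).domain) :
    R (ofResolvent R hR μ x - μ • (x : H)) = x := by
  obtain ⟨y, hy⟩ : ∃ y, R y = x := x.2
  rw [ofResolvent_apply hy, add_sub_cancel_right, hy]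

variable [CompleteSpace H]

theorem dense_domain_ofResolvent (hR_sa : IsSelfAdjoint R) :
    Dense ((ofResolvent R hR μ).domain : Set H) := by
  have : (LinearMap.range (R : H →ₗ[𝕜] H))ᗮ = ⊥ := by
    rw [R.orthogonal_range, hR_sa.adjoint_eq]
    exact LinearMap.ker_eq_bot.mpr hR
  exact Submodule.dense_iff_topologicalClosure_eq_top.mpr
    (Submodule.topologicalClosure_eq_top_iff.mpr this)

theorem isFormalAdjoint_ofResolvent (hR_sa : IsSelfAdjoint R) (hμ : conj μ = μ) :
    (ofResolvent R hR μ).IsFormalAdjoint (ofResolvent R hR μ) := by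
  intro x x'
  obtain ⟨y, hy⟩ : ∃ y, R y = x := x.2
  obtain ⟨y', hy'⟩ : ∃ y', R y' = x' := x'.2
  rw [ofResolvent_apply hy, ofResolvent_apply hy', ← hy, ← hy', inner_add_left, inner_add_right,
    inner_smul_left, inner_smul_right, hμ, hR_sa.isSymmetric.apply_clm y y']

theorem eq_resolvent_of_mem_adjoint_domain (hR_sa : IsSelfAdjoint R) (hμ : conj μ = μ)
    (x : (ofResolvent R hR μ).adjoint.domain) :
    (x : H) = R ((ofResolvent R hR μ).adjoint x - μ • (x : H)) := by
  refine ext_inner_right 𝕜 fun z => ?_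
  have hx := adjoint_isFormalAdjoint (dense_domain_ofResolvent hR_sa) x
    ⟨R z, mem_domain_ofResolvent z⟩
  rw [ofResolvent_apply rfl, inner_add_right, inner_smul_right] at hx
  rw [hR_sa.isSymmetric.apply_clm, inner_sub_left, inner_smul_left, hμ]
  linear_combination -hx

theorem isSelfAdjoint_ofResolvent (hR_sa : IsSelfAdjoint R) (hμ : conj μ = μ) :
    IsSelfAdjoint (ofResolvent R hR μ) := by
  refine le_antisymm ?_
    ((isFormalAdjoint_ofResolvent hR_sa hμ).le_adjoint (dense_domain_ofResolvent hR_sa))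
  refine ⟨fun x hx => ?_, fun x y hxy => ?_⟩
  · exact ⟨_, (eq_resolvent_of_mem_adjoint_domain hR_sa hμ ⟨x, hx⟩).symm⟩
  · exact (ofResolvent_apply_eq (hxy ▸ eq_resolvent_of_mem_adjoint_domain hR_sa hμ x)).symm

end LinearPMap

section Form

variable {D H : Type*} [NormedAddCommGroup D] [InnerProductSpace 𝕜 D]
  [NormedAddCommGroup H] [InnerProductSpace 𝕜 H] {ι : D →L[𝕜] H} {b : D → D → 𝕜} {μ : 𝕜}
  {Φ : D → D}

theorem isLinearMap_of_inner_eq (hb_add : ∀ f f' g, b (f + f') g = b f g + b f' g)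
    (hb_smul : ∀ (c : 𝕜) f g, b (c • f) g = conj c * b f g)
    (hΦ : ∀ f g, ⟪Φ f, g⟫_𝕜 = b f g - μ * ⟪ι f, ι g⟫_𝕜) : IsLinearMap 𝕜 Φ where
  map_add f f' := ext_inner_right 𝕜 fun g => by
    rw [inner_add_left, hΦ, hΦ, hΦ, hb_add, map_add, inner_add_left]
    ring
  map_smul c f := ext_inner_right 𝕜 fun g => by
    rw [inner_smul_left, hΦ, hΦ, hb_smul, map_smul, inner_smul_left]
    ring

theorem isSymmetric_of_inner_eq (hb_herm : ∀ f g, b g f = conj (b f g)) (hμ : conj μ = μ)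
    {L : D →ₗ[𝕜] D} (hL : ∀ f g, ⟪L f, g⟫_𝕜 = b f g - μ * ⟪ι f, ι g⟫_𝕜) : L.IsSymmetric :=
  fun f g => by
    rw [hL, ← inner_conj_symm f, hL, map_sub, map_mul, hμ, inner_conj_symm, ← hb_herm]

theorem exists_isSelfAdjoint_inverse_of_inner_eq [CompleteSpace D]
    (hb_add : ∀ f f' g, b (f + f') g = b f g + b f' g)
    (hb_smul : ∀ (c : 𝕜) f g, b (c • f) g = conj c * b f g)
    (hb_herm : ∀ f g, b g f = conj (b f g)) (hμ : conj μ = μ)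
    (hΦ : ∀ f g, ⟪Φ f, g⟫_𝕜 = b f g - μ * ⟪ι f, ι g⟫_𝕜) (hΦ_bij : Bijective Φ) :
    ∃ Ψ : D →L[𝕜] D, IsSelfAdjoint Ψ ∧ LeftInverse Φ Ψ ∧ RightInverse Φ Ψ :=
  (isSymmetric_of_inner_eq (L := (isLinearMap_of_inner_eq hb_add hb_smul hΦ).mk' Φ)
    hb_herm hμ hΦ).exists_isSelfAdjoint_inverse hΦ_bij

variable [CompleteSpace D] [CompleteSpace H] {Ψ : D →L[𝕜] D}

theorem form_inverse_adjoint_apply (hμ : conj μ = μ)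
    (hΦ : ∀ f g, ⟪Φ f, g⟫_𝕜 = b f g - μ * ⟪ι f, ι g⟫_𝕜) (hΦΨ : LeftInverse Φ Ψ) (y : H)
    (g : D) : b (Ψ (ι.adjoint y)) g = ⟪y + μ • ι (Ψ (ι.adjoint y)), ι g⟫_𝕜 := by
  have h := hΦ (Ψ (ι.adjoint y)) g
  rw [hΦΨ, ContinuousLinearMap.adjoint_inner_left] at h
  rw [inner_add_left, inner_smul_left, hμ, h]
  ring

theorem eq_inverse_adjoint_of_form_eq (hμ : conj μ = μ)
    (hΦ : ∀ f g, ⟪Φ f, g⟫_𝕜 = b f g - μ * ⟪ι f, ι g⟫_𝕜) (hΨΦ : RightInverse Φ Ψ) {f : D}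
    {h : H} (hf : ∀ g, b f g = ⟪h, ι g⟫_𝕜) : ι f = (ι ∘L Ψ ∘L ι.adjoint) (h - μ • ι f) := by
  have : Φ f = ι.adjoint (h - μ • ι f) := ext_inner_right 𝕜 fun g => by
    rw [hΦ, ContinuousLinearMap.adjoint_inner_left, inner_sub_left, inner_smul_left, hμ, hf]
  simp only [ContinuousLinearMap.comp_apply, ← this, hΨΦ f]

theorem mem_range_inverse_adjoint_iff (hμ : conj μ = μ)
    (hΦ : ∀ f g, ⟪Φ f, g⟫_𝕜 = b f g - μ * ⟪ι f, ι g⟫_𝕜) (hΦΨ : LeftInverse Φ Ψ)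
    (hΨΦ : RightInverse Φ Ψ) (x : H) :
    x ∈ LinearMap.range (ι ∘L Ψ ∘L ι.adjoint : H →ₗ[𝕜] H) ↔
      ∃ f, ι f = x ∧ ∃ h, ∀ g, b f g = ⟪h, ι g⟫_𝕜 := by
  constructor
  · rintro ⟨y, rfl⟩
    exact ⟨_, rfl, _, form_inverse_adjoint_apply hμ hΦ hΦΨ y⟩
  · rintro ⟨f, rfl, h, hf⟩
    exact ⟨_, (eq_inverse_adjoint_of_form_eq hμ hΦ hΨΦ hf).symm⟩

end Form

end

open LinearPMap

theorem klmn_selfAdjoint_restriction_general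
    {D H : Type*} [NormedAddCommGroup D] [InnerProductSpace ℂ D] [CompleteSpace D]
    [NormedAddCommGroup H] [InnerProductSpace ℂ H] [CompleteSpace H]
    (ι : D →L[ℂ] H) (hι_inj : Function.Injective ι) (hι_dense : DenseRange ι)
    (b : D → D → ℂ)
    (hb_add₁ : ∀ f f' g : D, b (f + f') g = b f g + b f' g)
    (hb_smul₁ : ∀ (c : ℂ) (f g : D), b (c • f) g = (starRingEnd ℂ) c * b f g)
    (hb_herm : ∀ f g : D, b g f = (starRingEnd ℂ) (b f g))
    (lam : ℝ)
    (Φ : D → D)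
    (hΦ : ∀ f g : D, (inner ℂ (Φ f) g : ℂ) = b f g - (lam : ℂ) * (inner ℂ (ι f) (ι g) : ℂ))
    (hΦ_bij : Function.Bijective Φ) :
    ∃ T : H →ₗ.[ℂ] H,
      (T.domain : Set H) =
        {x : H | ∃ f : D, ι f = x ∧ ∃ h : H, ∀ g : D, b f g = (inner ℂ h (ι g) : ℂ)} ∧
      Dense (T.domain : Set H) ∧
      (∀ (f : D) (h : H), (∀ g : D, b f g = (inner ℂ h (ι g) : ℂ)) →
        ∀ hx : ι f ∈ T.domain, T ⟨ι f, hx⟩ = h) ∧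
      IsSelfAdjoint T ∧
      ∃ Rb : H →L[ℂ] H,
        (∀ y : H, ∃ hx : Rb y ∈ T.domain, T ⟨Rb y, hx⟩ - (lam : ℂ) • Rb y = y) ∧
        (∀ x : T.domain, Rb (T x - (lam : ℂ) • (x : H)) = (x : H)) := by
  have hlam : conj (lam : ℂ) = lam := Complex.conj_ofReal lam
  obtain ⟨Ψ, hΨ, hΦΨ, hΨΦ⟩ :=
    exists_isSelfAdjoint_inverse_of_inner_eq hb_add₁ hb_smul₁ hb_herm hlam hΦ hΦ_bij
  set R := ι ∘L Ψ ∘L ι.adjoint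
  have hR : Injective R :=
    hι_inj.comp (hΦΨ.injective.comp (ContinuousLinearMap.injective_adjoint_of_denseRange hι_dense))
  have hR_sa : IsSelfAdjoint R := hΨ.conj_adjoint ι
  refine ⟨ofResolvent R hR lam, Set.ext (mem_range_inverse_adjoint_iff hlam hΦ hΦΨ hΨΦ),
    dense_domain_ofResolvent hR_sa, fun f h hf hx => ?_, isSelfAdjoint_ofResolvent hR_sa hlam, R,
    fun y => ⟨mem_domain_ofResolvent y, ?_⟩, resolvent_ofResolvent_sub_smul⟩
  · exact ofResolvent_apply_eq (eq_inverse_adjoint_of_form_eq hlam hΦ hΨΦ hf)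
  · rw [ofResolvent_apply rfl, add_sub_cancel_right]

/-- KLMN-type theorem. Let `ι : D → H` be a Hilbert triplet embedding (injective, continuous,
dense range) and `b` a bounded Hermitian sesquilinear form on `D`. Assume that for some
`λ ∈ ℝ` the Riesz representative map `Φ : D → D`, defined by
`⟨Φ f, g⟩_D = b(f, g) − λ⟨ι f, ι g⟩_H`, is a bijection of `D`.  Then the operator `X₀` in `H`
with domain `{ι f : ∃ h, b(f, ·) = ⟨h, ι ·⟩}` and `X₀(ι f) = h` is densely defined,
self-adjoint, and `λ` lies in its resolvent set. -/
theorem klmn_selfAdjoint_restriction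
    {D H : Type*} [NormedAddCommGroup D] [InnerProductSpace ℂ D] [CompleteSpace D]
    [NormedAddCommGroup H] [InnerProductSpace ℂ H] [CompleteSpace H]
    (ι : D →L[ℂ] H) (hι_inj : Function.Injective ι) (hι_dense : DenseRange ι)
    (b : D → D → ℂ)
    (hb_add₁ : ∀ f f' g : D, b (f + f') g = b f g + b f' g)
    (hb_smul₁ : ∀ (c : ℂ) (f g : D), b (c • f) g = (starRingEnd ℂ) c * b f g)
    (hb_add₂ : ∀ f g g' : D, b f (g + g') = b f g + b f g')
    (hb_smul₂ : ∀ (c : ℂ) (f g : D), b f (c • g) = c * b f g)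
    (hb_herm : ∀ f g : D, b g f = (starRingEnd ℂ) (b f g))
    (hb_bdd : ∃ M : ℝ, ∀ f g : D, ‖b f g‖ ≤ M * ‖f‖ * ‖g‖)
    (lam : ℝ)
    (Φ : D → D)
    (hΦ : ∀ f g : D, (inner ℂ (Φ f) g : ℂ) = b f g - (lam : ℂ) * (inner ℂ (ι f) (ι g) : ℂ))
    (hΦ_bij : Function.Bijective Φ) :
    ∃ T : H →ₗ.[ℂ] H,
      (T.domain : Set H) =
        {x : H | ∃ f : D, ι f = x ∧ ∃ h : H, ∀ g : D, b f g = (inner ℂ h (ι g) : ℂ)} ∧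
      Dense (T.domain : Set H) ∧
      (∀ (f : D) (h : H), (∀ g : D, b f g = (inner ℂ h (ι g) : ℂ)) →
        ∀ hx : ι f ∈ T.domain, T ⟨ι f, hx⟩ = h) ∧
      IsSelfAdjoint T ∧
      ∃ Rb : H →L[ℂ] H,
        (∀ y : H, ∃ hx : Rb y ∈ T.domain, T ⟨Rb y, hx⟩ - (lam : ℂ) • Rb y = y) ∧
        (∀ x : T.domain, Rb (T x - (lam : ℂ) • (x : H)) = (x : H)) :=
  klmn_selfAdjoint_restriction_general ι hι_inj hι_dense b hb_add₁ hb_smul₁ hb_herm lam Φ hΦ hΦ_bij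
end

section
/- (Krein-type resolvent formula for a finite-rank perturbation.) If the n×n matrix Γ(λ), with entries Γ(λ)_{ij} := ⟨f_i, R f_j⟩ − (𝐁⁻¹)_{ij}, is invertible, then H_B − λ·id is bijective and its inverse is the continuous linear map g ↦ R g − Σ_{i,j=1}^n (Γ(λ)⁻¹)_{ij} · ⟨f_j, R g⟩ · R f_i. -/
/-!
With `U c = ∑ i, c i • f i` and `V x = (⟪f j, x⟫)_j`, the perturbation is `H_B = T - U B V` and
`Γ(λ) = V R U - B⁻¹`, so the formula is the Woodbury identity
`(A - U B V)⁻¹ = R - R U (V R U - B⁻¹)⁻¹ V R` for `A = T - λ`. Both one-sided inverse identities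
reduce to `V R U Γ⁻¹ = 1 + B⁻¹ Γ⁻¹` and `Γ⁻¹ V R U = 1 + Γ⁻¹ B⁻¹`.
-/

section Woodbury

variable {S E F : Type*} [Semiring S] [AddCommGroup E] [Module S E] [AddCommGroup F] [Module S F]
  {A R : E →ₗ[S] E} {U : F →ₗ[S] E} {V : E →ₗ[S] F} {B B' Γ Γ' : F →ₗ[S] F}

theorem woodbury_right_inverse (hAR : A ∘ₗ R = .id) (hBB' : B ∘ₗ B' = .id)
    (hΓΓ' : Γ ∘ₗ Γ' = .id) (hΓ : V ∘ₗ R ∘ₗ U = Γ + B') :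
    (A - U ∘ₗ B ∘ₗ V) ∘ₗ (R - R ∘ₗ U ∘ₗ Γ' ∘ₗ V ∘ₗ R) = .id := by
  simp only [LinearMap.ext_iff, LinearMap.comp_apply, LinearMap.id_apply, LinearMap.add_apply,
    LinearMap.sub_apply] at hAR hBB' hΓΓ' hΓ ⊢
  intro g
  simp only [map_sub, map_add, hAR, hΓ, hΓΓ', hBB']
  abel

theorem woodbury_left_inverse (hRA : R ∘ₗ A = .id) (hB'B : B' ∘ₗ B = .id)
    (hΓ'Γ : Γ' ∘ₗ Γ = .id) (hΓ : V ∘ₗ R ∘ₗ U = Γ + B') :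
    (R - R ∘ₗ U ∘ₗ Γ' ∘ₗ V ∘ₗ R) ∘ₗ (A - U ∘ₗ B ∘ₗ V) = .id := by
  simp only [LinearMap.ext_iff, LinearMap.comp_apply, LinearMap.id_apply, LinearMap.add_apply,
    LinearMap.sub_apply] at hRA hB'B hΓ'Γ hΓ ⊢
  intro g
  simp only [map_sub, map_add, hRA, hΓ, hΓ'Γ, hB'B]
  abel

end Woodbury

theorem Matrix.mulVecLin_comp_mulVecLin_nonsing_inv {n S : Type*} [Fintype n] [DecidableEq n]
    [CommRing S] {M : Matrix n n S} (h : IsUnit M.det) :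
    M.mulVecLin ∘ₗ M⁻¹.mulVecLin = .id := by
  rw [← Matrix.mulVecLin_mul, M.mul_nonsing_inv h, Matrix.mulVecLin_one]

theorem Matrix.mulVecLin_nonsing_inv_comp_mulVecLin {n S : Type*} [Fintype n] [DecidableEq n]
    [CommRing S] {M : Matrix n n S} (h : IsUnit M.det) :
    M⁻¹.mulVecLin ∘ₗ M.mulVecLin = .id := by
  rw [← Matrix.mulVecLin_mul, M.nonsing_inv_mul h, Matrix.mulVecLin_one]

theorem ContinuousLinearMap.coe_sum_sum_smul_smulRight {S M₁ M₂ ι κ : Type*} [CommSemiring S]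
    [TopologicalSpace S] [TopologicalSpace M₁] [AddCommMonoid M₁] [Module S M₁]
    [TopologicalSpace M₂] [AddCommMonoid M₂] [Module S M₂] [ContinuousSMul S M₂]
    [ContinuousAdd M₂] [Fintype ι] [Fintype κ] (M : Matrix ι κ S) (φ : κ → M₁ →L[S] S)
    (v : ι → M₂) :
    ((∑ i, ∑ j, M i j • (φ j).smulRight (v i) : M₁ →L[S] M₂) : M₁ →ₗ[S] M₂) =
      Fintype.linearCombination S v ∘ₗ M.mulVecLin ∘ₗ
        LinearMap.pi fun j => (φ j : M₁ →ₗ[S] S) := by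
  ext x
  simp [Fintype.linearCombination_apply, Matrix.mulVec, dotProduct, Finset.sum_smul, smul_smul]

theorem pi_innerSL_comp_comp_linearCombination {𝕜 E F ι κ : Type*} [RCLike 𝕜]
    [NormedAddCommGroup E] [InnerProductSpace 𝕜 E] [NormedAddCommGroup F] [InnerProductSpace 𝕜 F]
    [Fintype ι] (g : κ → F) (R : E →ₗ[𝕜] F) (f : ι → E) :
    (LinearMap.pi fun j => (innerSL 𝕜 (g j) : F →ₗ[𝕜] 𝕜)) ∘ₗ R ∘ₗ
        Fintype.linearCombination 𝕜 f =
      (Matrix.of fun i j => inner 𝕜 (g i) (R (f j))).mulVecLin := by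
  ext c i
  simp [Fintype.linearCombination_apply, Matrix.mulVec, dotProduct, mul_comm]

theorem krein_resolvent_formula_general
    {H : Type*} [NormedAddCommGroup H] [InnerProductSpace ℂ H]
    (T : H →L[ℂ] H) (lam : ℂ) (R : H →L[ℂ] H)
    (hR₁ : ∀ g : H, (T - lam • (1 : H →L[ℂ] H)) (R g) = g)
    (hR₂ : ∀ g : H, R ((T - lam • (1 : H →L[ℂ] H)) g) = g)
    (n : ℕ) (f : Fin n → H)
    (B : Matrix (Fin n) (Fin n) ℂ) (hB : IsUnit B.det)
    (Γ : Matrix (Fin n) (Fin n) ℂ)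
    (hΓdef : ∀ i j : Fin n, Γ i j = (inner ℂ (f i) (R (f j)) : ℂ) - B⁻¹ i j)
    (hΓ : IsUnit Γ.det) :
    let HB : H →L[ℂ] H := T - ∑ i : Fin n, ∑ j : Fin n,
      B i j • ((innerSL ℂ (f j)).smulRight (f i))
    let K : H →L[ℂ] H := R - ∑ i : Fin n, ∑ j : Fin n,
      Γ⁻¹ i j • (((innerSL ℂ (f j)).comp R).smulRight (R (f i)))
    Function.Bijective ⇑(HB - lam • (1 : H →L[ℂ] H)) ∧
    (∀ g : H, (HB - lam • (1 : H →L[ℂ] H)) (K g) = g) ∧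
    (∀ g : H, K ((HB - lam • (1 : H →L[ℂ] H)) g) = g) := by
  intro HB K
  set A : H →L[ℂ] H := T - lam • 1
  set U := Fintype.linearCombination ℂ f
  set V : H →ₗ[ℂ] Fin n → ℂ := LinearMap.pi fun j => (innerSL ℂ (f j) : H →ₗ[ℂ] ℂ)
  have hHB : ((HB - lam • 1 : H →L[ℂ] H) : H →ₗ[ℂ] H) = A - U ∘ₗ B.mulVecLin ∘ₗ V := by
    rw [← ContinuousLinearMap.coe_sum_sum_smul_smulRight, ← ContinuousLinearMap.toLinearMap_sub]
    congr 1
    simp only [HB, A]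
    abel
  have hK : (K : H →ₗ[ℂ] H) = (R : H →ₗ[ℂ] H) - R ∘ₗ U ∘ₗ Γ⁻¹.mulVecLin ∘ₗ V ∘ₗ R := by
    rw [ContinuousLinearMap.toLinearMap_sub, ContinuousLinearMap.coe_sum_sum_smul_smulRight]
    ext g
    simp [U, V, Fintype.linearCombination_apply]
    rfl
  have hVRU : V ∘ₗ (R : H →ₗ[ℂ] H) ∘ₗ U = Γ.mulVecLin + B⁻¹.mulVecLin := by
    rw [pi_innerSL_comp_comp_linearCombination, ← Matrix.mulVecLin_add]
    congr 1
    ext i j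
    simp [hΓdef]
  have hright : ((HB - lam • 1 : H →L[ℂ] H) : H →ₗ[ℂ] H) ∘ₗ K = .id := by
    rw [hHB, hK]
    exact woodbury_right_inverse (LinearMap.ext hR₁)
      (Matrix.mulVecLin_comp_mulVecLin_nonsing_inv hB)
      (Matrix.mulVecLin_comp_mulVecLin_nonsing_inv hΓ) hVRU
  have hleft : (K : H →ₗ[ℂ] H) ∘ₗ (HB - lam • 1 : H →L[ℂ] H) = .id := by
    rw [hHB, hK]
    exact woodbury_left_inverse (LinearMap.ext hR₂)
      (Matrix.mulVecLin_nonsing_inv_comp_mulVecLin hB)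
      (Matrix.mulVecLin_nonsing_inv_comp_mulVecLin hΓ) hVRU
  exact ⟨Function.bijective_iff_has_inverse.2
      ⟨K, LinearMap.congr_fun hleft, LinearMap.congr_fun hright⟩,
    LinearMap.congr_fun hright, LinearMap.congr_fun hleft⟩

/-- Krein-type resolvent formula for a finite-rank perturbation
`H_B = T − Σ_{ij} B_{ij} |f_i⟩⟨f_j|`: if the matrix
`Γ(λ)_{ij} = ⟨f_i, R f_j⟩ − (B⁻¹)_{ij}` is invertible (where `R = (T − λ)⁻¹`), then
`H_B − λ` is bijective with inverse `g ↦ R g − Σ_{ij} (Γ(λ)⁻¹)_{ij} ⟨f_j, R g⟩ R f_i`. -/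
theorem krein_resolvent_formula
    {H : Type*} [NormedAddCommGroup H] [InnerProductSpace ℂ H] [CompleteSpace H]
    (T : H →L[ℂ] H) (lam : ℂ) (R : H →L[ℂ] H)
    (hR₁ : ∀ g : H, (T - lam • (1 : H →L[ℂ] H)) (R g) = g)
    (hR₂ : ∀ g : H, R ((T - lam • (1 : H →L[ℂ] H)) g) = g)
    (n : ℕ) (hn : 1 ≤ n) (f : Fin n → H)
    (B : Matrix (Fin n) (Fin n) ℂ) (hB : IsUnit B.det)
    (Γ : Matrix (Fin n) (Fin n) ℂ)
    (hΓdef : ∀ i j : Fin n, Γ i j = (inner ℂ (f i) (R (f j)) : ℂ) - B⁻¹ i j)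
    (hΓ : IsUnit Γ.det) :
    let HB : H →L[ℂ] H := T - ∑ i : Fin n, ∑ j : Fin n,
      B i j • ((innerSL ℂ (f j)).smulRight (f i))
    let K : H →L[ℂ] H := R - ∑ i : Fin n, ∑ j : Fin n,
      Γ⁻¹ i j • (((innerSL ℂ (f j)).comp R).smulRight (R (f i)))
    Function.Bijective ⇑(HB - lam • (1 : H →L[ℂ] H)) ∧
    (∀ g : H, (HB - lam • (1 : H →L[ℂ] H)) (K g) = g) ∧
    (∀ g : H, K ((HB - lam • (1 : H →L[ℂ] H)) g) = g) :=
  krein_resolvent_formula_general T lam R hR₁ hR₂ n f B hB Γ hΓdef hΓ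
end

section
/- (Eigenvalues of a finite-rank perturbation are zeros of det Γ.) Assume in addition that f_1, …, f_n are linearly independent. If ξ ∈ ℂⁿ is a nonzero vector with Γ(λ)ξ = 0, where Γ(λ) is the n×n matrix with entries Γ(λ)_{ij} := ⟨f_i, R f_j⟩ − (𝐁⁻¹)_{ij}, then the vector h := Σ_{j=1}^n ξ_j · R f_j is nonzero and satisfies H_B h = λ h. In particular, if det Γ(λ) = 0 then λ is an eigenvalue of H_B. -/
/-!
Write `A := T - λ` and `h := Σ_j ξ_j R f_j`, so that `A h = Σ_j ξ_j f_j`, which is nonzero by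
linear independence; hence `h ≠ 0`. The equation `Γ(λ) ξ = 0` says that the vector
`(⟨f_i, h⟩)_i` equals `B⁻¹ ξ`, so the perturbation `Σ B_{ij} |f_i⟩⟨f_j|` sends `h` to
`Σ_i (B B⁻¹ ξ)_i f_i = A h`. Therefore `H_B h = T h - A h = λ h`.
-/

open Matrix

section RankOnePerturbation

variable {𝕜 E ι : Type*} [RCLike 𝕜] [NormedAddCommGroup E] [InnerProductSpace 𝕜 E] [Fintype ι]

theorem sum_sum_smul_smulRight_innerSL_apply (B : Matrix ι ι 𝕜) (f : ι → E) (x : E) :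
    (∑ i, ∑ j, B i j • (innerSL 𝕜 (f j)).smulRight (f i)) x =
      ∑ i, (B *ᵥ fun j => inner 𝕜 (f j) x) i • f i := by
  simp only [_root_.sum_apply, _root_.smul_apply,
    ContinuousLinearMap.smulRight_apply, innerSL_apply_apply, mulVec, dotProduct,
    Finset.sum_smul, smul_smul]

theorem inner_sum_smul_eq_mulVec_of_mulVec_eq_zero {f g : ι → E} {C Γ : Matrix ι ι 𝕜}
    (hΓ : ∀ i j, Γ i j = inner 𝕜 (f i) (g j) - C i j) {ξ : ι → 𝕜} (hΓξ : Γ *ᵥ ξ = 0) :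
    (fun i => inner 𝕜 (f i) (∑ j, ξ j • g j)) = C *ᵥ ξ := by
  have hΓ' : Γ = of (fun i j => inner 𝕜 (f i) (g j)) - C := Matrix.ext hΓ
  rw [hΓ', sub_mulVec, sub_eq_zero] at hΓξ
  rw [← hΓξ]
  ext i
  simp only [inner_sum, inner_smul_right, mulVec, dotProduct, of_apply, mul_comm]

end RankOnePerturbation

theorem eigenvalue_of_det_gamma_eq_zero_general
    {H : Type*} [NormedAddCommGroup H] [InnerProductSpace ℂ H]
    (T : H →L[ℂ] H) (lam : ℂ) (R : H →L[ℂ] H)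
    (hR₁ : ∀ g : H, (T - lam • (1 : H →L[ℂ] H)) (R g) = g)
    (n : ℕ) (f : Fin n → H) (hf : LinearIndependent ℂ f)
    (B : Matrix (Fin n) (Fin n) ℂ) (hB : IsUnit B.det)
    (Γ : Matrix (Fin n) (Fin n) ℂ)
    (hΓdef : ∀ i j : Fin n, Γ i j = (inner ℂ (f i) (R (f j)) : ℂ) - B⁻¹ i j)
    (ξ : Fin n → ℂ) (hξ : ξ ≠ 0) (hΓξ : Γ.mulVec ξ = 0) :
    let HB : H →L[ℂ] H := T - ∑ i : Fin n, ∑ j : Fin n,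
      B i j • ((innerSL ℂ (f j)).smulRight (f i))
    (∑ j : Fin n, ξ j • R (f j)) ≠ 0 ∧
    HB (∑ j : Fin n, ξ j • R (f j)) = lam • (∑ j : Fin n, ξ j • R (f j)) ∧
    (Γ.det = 0 → ∃ h : H, h ≠ 0 ∧ HB h = lam • h) := by
  intro HB
  set h : H := ∑ j, ξ j • R (f j)
  have hAh : (T - lam • (1 : H →L[ℂ] H)) h = ∑ j, ξ j • f j := by
    simp only [h, map_sum, map_smul, hR₁]
  have hPh : (∑ i, ∑ j, B i j • (innerSL ℂ (f j)).smulRight (f i)) h = ∑ j, ξ j • f j := by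
    rw [sum_sum_smul_smulRight_innerSL_apply,
      inner_sum_smul_eq_mulVec_of_mulVec_eq_zero hΓdef hΓξ, mulVec_mulVec,
      mul_nonsing_inv B hB, one_mulVec]
  have hne : h ≠ 0 := fun h0 =>
    hξ (funext (Fintype.linearIndependent_iff.mp hf ξ (by rw [← hAh, h0, map_zero])))
  have heig : HB h = lam • h := by
    have hTh : T h - lam • h = ∑ j, ξ j • f j := hAh
    simp only [HB, _root_.sub_apply, hPh, ← hTh, sub_sub_cancel]
  exact ⟨hne, heig, fun _ => ⟨h, hne, heig⟩⟩

/-- Eigenvalues of the finite-rank perturbation `H_B = T − Σ_{ij} B_{ij} |f_i⟩⟨f_j|` are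
zeros of `det Γ(λ)`: if `f_1, …, f_n` are linearly independent and `ξ ≠ 0` satisfies
`Γ(λ) ξ = 0`, then `h = Σ_j ξ_j R f_j` is nonzero and `H_B h = λ h`.  In particular, if
`det Γ(λ) = 0` then `λ` is an eigenvalue of `H_B`. -/
theorem eigenvalue_of_det_gamma_eq_zero
    {H : Type*} [NormedAddCommGroup H] [InnerProductSpace ℂ H] [CompleteSpace H]
    (T : H →L[ℂ] H) (lam : ℂ) (R : H →L[ℂ] H)
    (hR₁ : ∀ g : H, (T - lam • (1 : H →L[ℂ] H)) (R g) = g)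
    (hR₂ : ∀ g : H, R ((T - lam • (1 : H →L[ℂ] H)) g) = g)
    (n : ℕ) (hn : 1 ≤ n) (f : Fin n → H) (hf : LinearIndependent ℂ f)
    (B : Matrix (Fin n) (Fin n) ℂ) (hB : IsUnit B.det)
    (Γ : Matrix (Fin n) (Fin n) ℂ)
    (hΓdef : ∀ i j : Fin n, Γ i j = (inner ℂ (f i) (R (f j)) : ℂ) - B⁻¹ i j)
    (ξ : Fin n → ℂ) (hξ : ξ ≠ 0) (hΓξ : Γ.mulVec ξ = 0) :
    let HB : H →L[ℂ] H := T - ∑ i : Fin n, ∑ j : Fin n,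
      B i j • ((innerSL ℂ (f j)).smulRight (f i))
    (∑ j : Fin n, ξ j • R (f j)) ≠ 0 ∧
    HB (∑ j : Fin n, ξ j • R (f j)) = lam • (∑ j : Fin n, ξ j • R (f j)) ∧
    (Γ.det = 0 → ∃ h : H, h ≠ 0 ∧ HB h = lam • h) :=
  eigenvalue_of_det_gamma_eq_zero_general T lam R hR₁ n f hf B hB Γ hΓdef ξ hξ hΓξ
end

section
/- Let f ∈ L²(ℝ₊, r^{n−1}dr) be such that the function g(r) := conj(f(r))·ψ(r)·r^{n−1}, extended by 0 to all of ℝ, is both integrable and square-integrable. Then ∫_ℝ |⟨f, ψ_x⟩|² dx = ∫₀^∞ 𝔰(r)·|f(r)|²·r^{n−1} dr, where ⟨f, ψ_x⟩ = ∫₀^∞ conj(f(r))·e^{−ixr}·ψ(r)·r^{n−1} dr. That is, the frame operator of the family {ψ_x}_{x∈ℝ} of affine coherent states acts as multiplication by the function 𝔰. -/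
/-!
Extending `g(r) = conj(f(r)) ψ(r) r^{n-1}` by zero to all of `ℝ`, the coefficient `⟨f, ψ_x⟩` is the
Fourier integral `∫ e^{-ixt} g(t) dt`, and `|g|² = 𝔰 |f|² r^{n-1} / 2π` on `ℝ₊`. The identity is
therefore Plancherel's theorem for `g ∈ L¹ ∩ L²`: the unitary Fourier transform on `L²` agrees almost
everywhere with the Fourier integral of an `L¹ ∩ L²` function, since both define the same tempered
distribution.
-/

open MeasureTheory Complex FourierTransform SchwartzMap
open scoped ContDiff InnerProductSpace Real

section FourierL1L2

variable {V F : Type*} [NormedAddCommGroup V] [InnerProductSpace ℝ V] [FiniteDimensional ℝ V]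
  [MeasurableSpace V] [BorelSpace V]
  [NormedAddCommGroup F] [InnerProductSpace ℂ F] [CompleteSpace F]

theorem MeasureTheory.MemLp.coeFn_fourier_toLp {g : V → F} (hg1 : Integrable g)
    (hg2 : MemLp g 2) : ((𝓕 (hg2.toLp g) : Lp F 2) : V → F) =ᵐ[volume] 𝓕 g := by
  refine ae_eq_of_integral_contDiff_smul_eq ((Lp.memLp _).locallyIntegrable one_le_two)
    (VectorFourier.fourierIntegral_continuous Real.continuous_fourierChar continuous_inner
      hg1).locallyIntegrable fun φ hφ hφc => ?_
  let Φ : 𝓢(V, ℂ) :=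
    (hφc.comp_left rfl : HasCompactSupport (ofRealCLM ∘ φ)).toSchwartzMap (by fun_prop)
  calc ∫ x, φ x • (𝓕 (hg2.toLp g) : Lp F 2 (volume : Measure V)) x
      = (𝓕 (hg2.toLp g : 𝓢'(V, F))) Φ := by
        rw [Lp.fourier_toTemperedDistribution_eq, Lp.toTemperedDistribution_apply]
        simp [Φ, coe_smul]
    _ = ∫ x, 𝓕 (Φ : V → ℂ) x • g x := by
        rw [TemperedDistribution.fourier_apply, Lp.toTemperedDistribution_apply]
        exact integral_congr_ae (hg2.coeFn_toLp.mono fun x hx => by simp only [hx]; rfl)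
    _ = ∫ x, φ x • 𝓕 g x := by
        simpa [Φ, coe_smul] using! VectorFourier.integral_fourierIntegral_smul_eq_flip
          (L := innerₗ V) Real.continuous_fourierChar continuous_inner Φ.integrable hg1

theorem MeasureTheory.MemLp.integral_norm_sq_fourier {g : V → F} (hg1 : Integrable g)
    (hg2 : MemLp g 2) : ∫ ξ, ‖𝓕 g ξ‖ ^ 2 = ∫ x, ‖g x‖ ^ 2 := by
  have h : ∫ ξ, ⟪𝓕 g ξ, 𝓕 g ξ⟫_ℂ = ∫ x, ⟪g x, g x⟫_ℂ :=
    calc ∫ ξ, ⟪𝓕 g ξ, 𝓕 g ξ⟫_ℂ = ⟪𝓕 (hg2.toLp g), 𝓕 (hg2.toLp g)⟫_ℂ :=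
          integral_congr_ae (by filter_upwards [hg2.coeFn_fourier_toLp hg1] with ξ hξ; rw [hξ])
      _ = ⟪hg2.toLp g, hg2.toLp g⟫_ℂ := Lp.inner_fourier_eq _ _
      _ = ∫ x, ⟪g x, g x⟫_ℂ :=
          integral_congr_ae (by filter_upwards [hg2.coeFn_toLp] with x hx; rw [hx])
  apply ofRealLI.injective
  simpa [← LinearIsometry.integral_comp_comm, inner_self_eq_norm_sq_to_K] using h

theorem MeasureTheory.MemLp.integral_norm_sq_integral_cexp_smul {g : ℝ → F}
    (hg1 : Integrable g) (hg2 : MemLp g 2) :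
    ∫ x : ℝ, ‖∫ t : ℝ, cexp (-(I * x * t)) • g t‖ ^ 2 = 2 * π * ∫ t : ℝ, ‖g t‖ ^ 2 := by
  have h𝓕 : ∀ x : ℝ, ∫ t : ℝ, cexp (-(I * x * t)) • g t = 𝓕 g (x / (2 * π)) := fun x => by
    rw [Real.fourier_real_eq_integral_exp_smul]
    congr 1 with t
    congr 2
    push_cast
    field_simp
  simp_rw [h𝓕]
  rw [Measure.integral_comp_div (fun ξ => ‖𝓕 g ξ‖ ^ 2), hg2.integral_norm_sq_fourier hg1,
    abs_of_pos Real.two_pi_pos, smul_eq_mul]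

end FourierL1L2

theorem affine_coherent_states_frame_operator_general
    (n : ℕ) (ψ f : ℝ → ℂ)
    (hg_int : Integrable
      (fun r : ℝ => if 0 < r then (starRingEnd ℂ) (f r) * ψ r * (r : ℂ) ^ (n - 1) else 0)
      volume)
    (hg_sq : MemLp
      (fun r : ℝ => if 0 < r then (starRingEnd ℂ) (f r) * ψ r * (r : ℂ) ^ (n - 1) else 0)
      2 volume) :
    ∫ x : ℝ, ‖∫ r in Set.Ioi (0 : ℝ),
        (starRingEnd ℂ) (f r) * Complex.exp (-(Complex.I * (x : ℂ) * (r : ℂ))) * ψ r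
          * (r : ℂ) ^ (n - 1)‖ ^ 2
      = ∫ r in Set.Ioi (0 : ℝ),
          (2 * Real.pi * r ^ (n - 1) * ‖ψ r‖ ^ 2) * ‖f r‖ ^ 2 * r ^ (n - 1) := by
  set g : ℝ → ℂ := fun r => (starRingEnd ℂ) (f r) * ψ r * (r : ℂ) ^ (n - 1)
  have hextend : (fun r : ℝ => if 0 < r then g r else 0) = (Set.Ioi 0).indicator g := by
    ext r; simp [Set.indicator_apply]
  rw [hextend] at hg_int hg_sq
  have hcoeff : ∀ x : ℝ, ∫ r in Set.Ioi (0 : ℝ),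
      (starRingEnd ℂ) (f r) * cexp (-(I * x * r)) * ψ r * (r : ℂ) ^ (n - 1)
        = ∫ t : ℝ, cexp (-(I * x * t)) • (Set.Ioi 0).indicator g t := fun x => by
    rw [← integral_indicator measurableSet_Ioi]
    congr 1 with t
    simp only [Set.indicator_apply, g]
    split_ifs <;> simp only [smul_eq_mul, mul_zero]; ring
  have hdensity : ∫ r in Set.Ioi (0 : ℝ), (2 * π * r ^ (n - 1) * ‖ψ r‖ ^ 2) * ‖f r‖ ^ 2 * r ^ (n - 1)
      = 2 * π * ∫ t : ℝ, ‖(Set.Ioi 0).indicator g t‖ ^ 2 := by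
    rw [← integral_const_mul, ← integral_indicator measurableSet_Ioi]
    congr 1 with t
    simp only [Set.indicator_apply, g]
    split_ifs with ht
    · simp only [norm_mul, norm_conj, norm_pow, norm_real, Real.norm_eq_abs,
        abs_of_pos (Set.mem_Ioi.mp ht)]
      ring
    · simp
  simp_rw [hcoeff, hdensity]
  exact hg_sq.integral_norm_sq_integral_cexp_smul hg_int

/-- The frame operator of the family of affine coherent states `ψ_x(r) = e^{−ixr} ψ(r)` on
`L²(ℝ₊, r^{n−1}dr)` acts as multiplication by `𝔰(r) = 2π r^{n−1} |ψ(r)|²`: if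
`g(r) = conj(f(r)) ψ(r) r^{n−1}` (extended by `0`) is integrable and square-integrable, then
`∫_ℝ |⟨f, ψ_x⟩|² dx = ∫₀^∞ 𝔰(r) |f(r)|² r^{n−1} dr`. -/
theorem affine_coherent_states_frame_operator
    (n : ℕ) (hn : 1 ≤ n) (ψ f : ℝ → ℂ)
    (hψL2 : MemLp ψ 2
      ((volume.restrict (Set.Ioi (0 : ℝ))).withDensity fun r => ENNReal.ofReal (r ^ (n - 1))))
    (hfL2 : MemLp f 2
      ((volume.restrict (Set.Ioi (0 : ℝ))).withDensity fun r => ENNReal.ofReal (r ^ (n - 1))))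
    (hg_int : Integrable
      (fun r : ℝ => if 0 < r then (starRingEnd ℂ) (f r) * ψ r * (r : ℂ) ^ (n - 1) else 0)
      volume)
    (hg_sq : MemLp
      (fun r : ℝ => if 0 < r then (starRingEnd ℂ) (f r) * ψ r * (r : ℂ) ^ (n - 1) else 0)
      2 volume) :
    ∫ x : ℝ, ‖∫ r in Set.Ioi (0 : ℝ),
        (starRingEnd ℂ) (f r) * Complex.exp (-(Complex.I * (x : ℂ) * (r : ℂ))) * ψ r
          * (r : ℂ) ^ (n - 1)‖ ^ 2
      = ∫ r in Set.Ioi (0 : ℝ),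
          (2 * Real.pi * r ^ (n - 1) * ‖ψ r‖ ^ 2) * ‖f r‖ ^ 2 * r ^ (n - 1) :=
  affine_coherent_states_frame_operator_general n ψ f hg_int hg_sq
end
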